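/- Consequences of the Baker–Pixley Theorem. Let A be a finite set. (a) For every fixed near unanimity operation u on A, there are only finitely many clones on A that contain u. (b) Every clone on A that contains a near unanimity operation is finitely generated, i.e. is the clone generated by some finite set of operations on A. -/
import Mathlib


universe u

/-- The type of finitary operations (of positive arity `n + 1`) on `A`. -/
abbrev Ops (A : Type u) : Type u := Σ n : ℕ, (Fin (n + 1) → A) → A

/-- A set of finitary operations on `A` is a clone if it contains all projection
operations and is closed under composition. -/
def IsClone {A : Type u} (C : Set (Ops A)) : Prop :=
  (∀ (n : ℕ) (i : Fin (n + 1)), (⟨n, fun x => x i⟩ : Ops A) ∈ C) ∧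
  ∀ (n m : ℕ) (f : (Fin (n + 1) → A) → A) (g : Fin (n + 1) → (Fin (m + 1) → A) → A),
    (⟨n, f⟩ : Ops A) ∈ C → (∀ i, (⟨m, g i⟩ : Ops A) ∈ C) →
    (⟨m, fun x => f fun i => g i x⟩ : Ops A) ∈ C

/-- The clone generated by a set `F` of operations: the least clone containing `F`. -/
def cloneGen {A : Type u} (F : Set (Ops A)) : Set (Ops A) :=
  ⋂₀ {C : Set (Ops A) | IsClone C ∧ F ⊆ C}

/-- The clone of all projection operations on `A`. -/
def projClone (A : Type u) : Set (Ops A) :=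
  {f : Ops A | ∃ i : Fin (f.1 + 1), f.2 = fun x => x i}

/-- A clone `M` is maximal if it is a proper subclone of the clone of all operations
and the clone of all operations is the only clone properly containing it. -/
def IsMaximalClone {A : Type u} (M : Set (Ops A)) : Prop :=
  IsClone M ∧ M ≠ Set.univ ∧
    ∀ D : Set (Ops A), IsClone D → M ⊆ D → D = M ∨ D = Set.univ

/-- A clone `C` is minimal if the clone of projections is its unique proper subclone. -/
def IsMinimalClone {A : Type u} (C : Set (Ops A)) : Prop :=
  IsClone C ∧ C ≠ projClone A ∧
    ∀ D : Set (Ops A), IsClone D → D ⊆ C → D = projClone A ∨ D = C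

/-- An `n`-ary operation `f` preserves a `k`-ary relation `ρ` if applying `f`
coordinatewise to tuples from `ρ` always yields a tuple in `ρ`. -/
def Preserves {A : Type u} {n k : ℕ} (f : (Fin n → A) → A) (ρ : Set (Fin k → A)) : Prop :=
  ∀ t : Fin n → Fin k → A, (∀ i, t i ∈ ρ) → (fun j => f fun i => t i j) ∈ ρ

/-- `Pol ρ` is the clone of all operations preserving the relation `ρ`. -/
def Pol {A : Type u} {k : ℕ} (ρ : Set (Fin k → A)) : Set (Ops A) :=
  {f : Ops A | Preserves f.2 ρ}

/-- A near unanimity operation: an `n`-ary operation with `n ≥ 3` satisfying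
`u(y,x,…,x) = u(x,y,x,…,x) = ⋯ = u(x,…,x,y) = x` for all `x, y`. -/
def IsNearUnanimity {A : Type u} {n : ℕ} (f : (Fin n → A) → A) : Prop :=
  3 ≤ n ∧ ∀ (x y : A) (i : Fin n), f (Function.update (fun _ => x) i y) = x


open Classical in
/-- Selector: pick a preimage of `s` under `idx` if one exists. -/
noncomputable def sel0 {m K : ℕ} (idx : Fin (m + 1) → Fin (K + 1)) (s : Fin (K + 1)) :
    Fin (m + 1) :=
  if h : ∃ j, idx j = s then h.choose else 0

lemma sel0_spec {m K : ℕ} (idx : Fin (m + 1) → Fin (K + 1)) (j : Fin (m + 1)) :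
    idx (sel0 idx (idx j)) = idx j := by
  have h : ∃ j', idx j' = idx j := ⟨j, rfl⟩
  rw [sel0, dif_pos h]
  exact h.choose_spec

lemma isClone_cloneGen {A : Type u} (F : Set (Ops A)) : IsClone (cloneGen F) := by
  constructor
  · intro n i C hC
    exact hC.1.1 n i
  · intro n m f g hf hg C hC
    exact hC.1.2 n m f g (hf C hC) (fun i => hg i C hC)

lemma subset_cloneGen {A : Type u} (F : Set (Ops A)) : F ⊆ cloneGen F :=
  fun _ hx _ hC => hC.2 hx

lemma cloneGen_subset {A : Type u} {F C : Set (Ops A)} (hC : IsClone C) (h : F ⊆ C) :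
    cloneGen F ⊆ C := fun _ hx => hx C ⟨hC, h⟩

/-- Base interpolation step: a function all of whose `card (Fin n → A)`-ary minors lie in a
clone `D` can be interpolated on any `n` points by a member of `D`. -/
lemma interp_base {A : Type u} [Fintype A] {D : Set (Ops A)} (hD : IsClone D) (n m : ℕ)
    (f : (Fin (m + 1) → A) → A) (β : Fin n → (Fin (m + 1) → A))
    (hf : ∀ idx : Fin (m + 1) → Fin (Fintype.card (Fin n → A) + 1),
      (⟨Fintype.card (Fin n → A), fun y => f (fun j => y (idx j))⟩ : Ops A) ∈ D) :
    ∃ g : (Fin (m + 1) → A) → A, (⟨m, g⟩ : Ops A) ∈ D ∧ ∀ i, g (β i) = f (β i) := by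
  set K := Fintype.card (Fin n → A) with hK
  let e : (Fin n → A) ≃ Fin K := Fintype.equivFin _
  let col : Fin (m + 1) → (Fin n → A) := fun j i => β i j
  let idx : Fin (m + 1) → Fin (K + 1) := fun j => (e (col j)).castSucc
  refine ⟨fun x => f (fun j => x (sel0 idx (idx j))), ?_, ?_⟩
  · exact hD.2 K m (fun y => f (fun j => y (idx j))) (fun s x => x (sel0 idx s))
      (hf idx) (fun s => hD.1 m (sel0 idx s))
  · intro i
    show f (fun j => β i (sel0 idx (idx j))) = f (β i)
    congr 1
    funext j
    have h1 : idx (sel0 idx (idx j)) = idx j := sel0_spec idx j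
    have h2 : col (sel0 idx (idx j)) = col j :=
      e.injective (Fin.castSucc_injective _ h1)
    exact congrFun h2 i

/-- **Key Baker–Pixley consequence**: a clone on a finite set containing a near unanimity
operation `u` of arity `n + 1` is generated by its members of arity index at most
`max (Fintype.card (Fin n → A)) n`. -/
lemma clone_eq_cloneGen {A : Type u} [Fintype A] {n : ℕ} {u : (Fin (n + 1) → A) → A}
    (hu : IsNearUnanimity u) {C : Set (Ops A)} (hC : IsClone C)
    (huC : (⟨n, u⟩ : Ops A) ∈ C) :
    C = cloneGen {g : Ops A | g ∈ C ∧ g.1 ≤ max (Fintype.card (Fin n → A)) n} := by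
  classical
  set K := Fintype.card (Fin n → A) with hKdef
  set F : Set (Ops A) := {g : Ops A | g ∈ C ∧ g.1 ≤ max K n} with hFdef
  have hD := isClone_cloneGen F
  have hFD := subset_cloneGen F
  have hDC : cloneGen F ⊆ C := cloneGen_subset hC (fun g hg => hg.1)
  apply Set.Subset.antisymm _ hDC
  rintro ⟨m, f⟩ hf
  have key : ∀ k (B : Finset (Fin (m + 1) → A)), B.card ≤ k →
      ∃ g : (Fin (m + 1) → A) → A,
        (⟨m, g⟩ : Ops A) ∈ cloneGen F ∧ ∀ b ∈ B, g b = f b := by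
    intro k
    induction k with
    | zero =>
      intro B hB
      have hBe : B = ∅ := Finset.card_eq_zero.mp (Nat.le_zero.mp hB)
      subst hBe
      exact ⟨fun x => x 0, hD.1 m 0, by simp⟩
    | succ k ih =>
      intro B hB
      by_cases hc : B.card ≤ n
      · rcases B.eq_empty_or_nonempty with hBe | ⟨b₀, hb₀⟩
        · subst hBe
          exact ⟨fun x => x 0, hD.1 m 0, by simp⟩
        · have hl : B.toList.length ≤ n := by
            rw [Finset.length_toList]; exact hc
          set β : Fin n → (Fin (m + 1) → A) := fun i => B.toList.getD i b₀ with hβ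
          have hfminors : ∀ idx : Fin (m + 1) → Fin (K + 1),
              (⟨K, fun y => f (fun j => y (idx j))⟩ : Ops A) ∈ cloneGen F := by
            intro idx
            apply hFD
            refine ⟨?_, le_max_left _ _⟩
            exact hC.2 m K f (fun j y => y (idx j)) hf (fun j => hC.1 K (idx j))
          obtain ⟨g, hgD, hgβ⟩ := interp_base hD n m f β hfminors
          refine ⟨g, hgD, ?_⟩
          intro b hb
          have hbl : b ∈ B.toList := Finset.mem_toList.mpr hb
          obtain ⟨j, hj, hget⟩ := List.getElem_of_mem hbl
          have hβj : β ⟨j, lt_of_lt_of_le hj hl⟩ = b := by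
            show B.toList.getD j b₀ = b
            rw [List.getD_eq_getElem _ _ hj]
            exact hget
          rw [← hβj]
          exact hgβ _
      · push_neg at hc
        obtain ⟨t, htB, htc⟩ := Finset.exists_subset_card_eq (show n + 1 ≤ B.card from hc)
        let eb := t.equivFinOfCardEq htc
        let b : Fin (n + 1) → (Fin (m + 1) → A) := fun i => (eb.symm i : _)
        have hbB : ∀ i, b i ∈ B := fun i => htB (eb.symm i).2
        have hbinj : Function.Injective b := fun i i' h =>
          eb.symm.injective (Subtype.coe_injective h)
        have herase : ∀ i, (B.erase (b i)).card ≤ k := by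
          intro i
          rw [Finset.card_erase_of_mem (hbB i)]
          omega
        choose g hg1 hg2 using fun i => ih (B.erase (b i)) (herase i)
        refine ⟨fun x => u (fun i => g i x), ?_, ?_⟩
        · exact hD.2 n m u g (hFD ⟨huC, le_max_right _ _⟩) hg1
        · intro c hcB
          show u (fun i => g i c) = f c
          by_cases hex : ∃ i, b i = c
          · obtain ⟨i₀, rfl⟩ := hex
            have hval : (fun i => g i (b i₀)) =
                Function.update (fun _ => f (b i₀)) i₀ (g i₀ (b i₀)) := by
              funext i
              by_cases hi : i = i₀
              · subst hi; simp
              · rw [Function.update_of_ne hi]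
                exact hg2 i (b i₀)
                  (Finset.mem_erase.mpr ⟨fun h => hi (hbinj h.symm), hcB⟩)
            rw [hval]
            exact hu.2 (f (b i₀)) (g i₀ (b i₀)) i₀
          · push_neg at hex
            have hval : (fun i => g i c) = fun _ => f c := by
              funext i
              exact hg2 i c (Finset.mem_erase.mpr ⟨fun h => hex i h.symm, hcB⟩)
            have hupd : Function.update (fun _ : Fin (n + 1) => f c) 0 (f c) =
                fun _ => f c := by
              funext i
              by_cases h : i = 0 <;> simp [h]
            rw [hval, ← hupd]
            exact hu.2 (f c) (f c) 0
  obtain ⟨g, hgD, hgf⟩ := key (Finset.univ : Finset (Fin (m + 1) → A)).card Finset.univ le_rfl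
  have hgfeq : g = f := funext fun x => hgf x (Finset.mem_univ x)
  exact hgfeq ▸ hgD

lemma finite_low_arity {A : Type u} [Fintype A] (N : ℕ) :
    {g : Ops A | g.1 ≤ N}.Finite := by
  classical
  have hsub : {g : Ops A | g.1 ≤ N} ⊆
      Set.range (fun p : (Σ i : Fin (N + 1), (Fin (i.1 + 1) → A) → A) =>
        (⟨p.1.1, p.2⟩ : Ops A)) := by
    rintro ⟨i, h⟩ hi
    exact ⟨⟨⟨i, Nat.lt_succ_of_le hi⟩, h⟩, rfl⟩
  exact (Set.finite_range _).subset hsub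

/-- **Consequences of the Baker–Pixley Theorem.**  Let `A` be a finite set.
(a) For every fixed near unanimity operation `u` on `A` there are only finitely many
clones on `A` containing `u`.  (b) Every clone on `A` containing a near unanimity
operation is finitely generated. -/
theorem baker_pixley_consequences {A : Type u} [Fintype A] :
    (∀ (n : ℕ) (u : (Fin (n + 1) → A) → A), IsNearUnanimity u →
        {C : Set (Ops A) | IsClone C ∧ (⟨n, u⟩ : Ops A) ∈ C}.Finite) ∧
    (∀ C : Set (Ops A), IsClone C →
        (∃ (n : ℕ) (u : (Fin (n + 1) → A) → A), IsNearUnanimity u ∧ (⟨n, u⟩ : Ops A) ∈ C) →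
        ∃ F : Set (Ops A), F.Finite ∧ C = cloneGen F) := by
  classical
  constructor
  · intro n u hu
    set N := max (Fintype.card (Fin n → A)) n with hN
    set S : Set (Ops A) := {g : Ops A | g.1 ≤ N} with hS
    have hSfin : S.Finite := finite_low_arity N
    apply Set.Finite.of_finite_image (f := fun C => C ∩ S)
    · apply Set.Finite.subset hSfin.finite_subsets
      rintro _ ⟨C, _, rfl⟩
      exact Set.inter_subset_right
    · intro C hC C' hC' hCC'
      have e1 : C = cloneGen (C ∩ S) := clone_eq_cloneGen hu hC.1 hC.2
      have e2 : C' = cloneGen (C' ∩ S) := clone_eq_cloneGen hu hC'.1 hC'.2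
      rw [e1, e2]; exact congrArg cloneGen hCC'
  · intro C hC h
    obtain ⟨n, u, hu, huC⟩ := h
    refine ⟨{g : Ops A | g ∈ C ∧ g.1 ≤ max (Fintype.card (Fin n → A)) n}, ?_,
      clone_eq_cloneGen hu hC huC⟩
    exact (finite_low_arity (max (Fintype.card (Fin n → A)) n)).subset fun g hg => hg.2
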